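/- There exist a real Banach space X and a finite-dimensional subspace F ⊆ X** such that, with V = (F₀)₀ ⊆ X (the pre-annihilator in X of the pre-annihilator of F in X*), one has λ(V, X) ≠ λ(F, X**). Concretely, for X = c₀ and F ⊆ ℓ∞ = (c₀)** the span of f₁ = (1, 0, 1, 1, …) and f₂ = (0, 1, 1, 1, …), the space V is one-dimensional, λ(V, c₀) = 1, while λ(F, ℓ∞) > 1. -/

import Mathlib

open NormedSpace
open scoped ENNReal ZeroAtInfty

noncomputable section

/-- The pre-annihilator of a subspace `H ⊆ E*` in `E`. -/
def preAnn {E : Type*} [NormedAddCommGroup E] [NormedSpace ℝ E]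
    (H : Submodule ℝ (StrongDual ℝ E)) : Submodule ℝ E where
  carrier := {x | ∀ ℓ ∈ H, ℓ x = 0}
  add_mem' := by
    intro a b ha hb ℓ hℓ
    simp [ha ℓ hℓ, hb ℓ hℓ]
  zero_mem' := by
    intro ℓ hℓ
    simp
  smul_mem' := by
    intro c x hx ℓ hℓ
    simp [hx ℓ hℓ]

/-- The relative projection constant of a subspace `W` of a normed space `Y`:
the infimum of the operator norms of continuous linear projections of `Y` onto `W`. -/
def relProjConst {Y : Type*} [NormedAddCommGroup Y] [NormedSpace ℝ Y]
    (W : Submodule ℝ Y) : ℝ :=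
  sInf {c | ∃ P : Y →L[ℝ] Y, P.comp P = P ∧ LinearMap.range (P : Y →ₗ[ℝ] Y) = W ∧ ‖P‖ = c}

/-- A real Banach space `X` together with a finite-dimensional subspace `F ⊆ X**`
such that `V = (F₀)₀ ⊆ X` satisfies `λ(V, X) ≠ λ(F, X**)`. -/
structure ProjConstCounterexample where
  X : Type
  [nacg : NormedAddCommGroup X]
  [ns : NormedSpace ℝ X]
  [cs : CompleteSpace X]
  F : Submodule ℝ (StrongDual ℝ (StrongDual ℝ X))
  finDim : Module.Finite ℝ F
  projConst_ne : relProjConst (Y := X) (preAnn (preAnn F)) ≠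
    relProjConst (Y := StrongDual ℝ (StrongDual ℝ X)) F

/-- The sequence `(1, 0, 1, 1, 1, …)`. -/
def f₁fn : ℕ → ℝ := fun i => if i = 1 then 0 else 1

/-- The sequence `(0, 1, 1, 1, 1, …)`. -/
def f₂fn : ℕ → ℝ := fun i => if i = 0 then 0 else 1

/-- `(1, 0, 1, 1, 1, …)` as an element of `ℓ∞`. -/
def f₁ : lp (fun _ : ℕ => ℝ) ∞ :=
  ⟨f₁fn, memℓp_infty ⟨1, by rintro r ⟨i, rfl⟩; simp only [f₁fn]; split <;> simp⟩⟩

/-- `(0, 1, 1, 1, 1, …)` as an element of `ℓ∞`. -/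
def f₂ : lp (fun _ : ℕ => ℝ) ∞ :=
  ⟨f₂fn, memℓp_infty ⟨1, by rintro r ⟨i, rfl⟩; simp only [f₂fn]; split <;> simp⟩⟩

/-- `F₀ = {y ∈ ℓ¹ : ⟨y, f₁⟩ = ⟨y, f₂⟩ = 0}`, the concrete pre-annihilator in
`ℓ¹ = (c₀)*` of the span of `f₁, f₂` in `ℓ∞ = (c₀)**`. -/
def F₀set : Set (lp (fun _ : ℕ => ℝ) 1) :=
  {y | ∑' i, y i * f₁fn i = 0 ∧ ∑' i, y i * f₂fn i = 0}

lemma pairing_summable (y : lp (fun _ : ℕ => ℝ) 1) {x : ℕ → ℝ} {C : ℝ}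
    (hC : ∀ i, ‖x i‖ ≤ C) : Summable fun i => y i * x i := by
  have hy : Summable fun i => ‖y i‖ := by
    have h := lp.memℓp y
    rw [memℓp_gen_iff (by norm_num)] at h
    simpa using h
  refine Summable.of_norm_bounded (hy.mul_right C) fun i => ?_
  rw [norm_mul]
  have h1 : ‖x i‖ ≤ C := hC i
  have h2 : (0 : ℝ) ≤ ‖y i‖ := norm_nonneg _
  nlinarith [norm_nonneg (y i), norm_nonneg (x i)]

/-- The concrete pre-pre-annihilator `V = {x ∈ c₀ : ⟨y, x⟩ = 0 for all y ∈ F₀}`. -/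
def Vc : Submodule ℝ C₀(ℕ, ℝ) where
  carrier := {x | ∀ y ∈ F₀set, ∑' i, y i * x i = 0}
  add_mem' := by
    intro a b ha hb y hy
    have hsa : Summable fun i => y i * a i :=
      pairing_summable y (C := ‖a.toBCF‖) fun i => a.toBCF.norm_coe_le_norm i
    have hsb : Summable fun i => y i * b i :=
      pairing_summable y (C := ‖b.toBCF‖) fun i => b.toBCF.norm_coe_le_norm i
    have : (fun i => y i * (a + b) i) = fun i => y i * a i + y i * b i := by
      funext i
      simp [mul_add]
    rw [this, hsa.tsum_add hsb, ha y hy, hb y hy, add_zero]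
  zero_mem' := by
    intro y hy
    simp
  smul_mem' := by
    intro c x hx y hy
    have hsx : Summable fun i => y i * x i :=
      pairing_summable y (C := ‖x.toBCF‖) fun i => x.toBCF.norm_coe_le_norm i
    have : (fun i => y i * (c • x) i) = fun i => c * (y i * x i) := by
      funext i
      simp [mul_comm, mul_assoc, mul_left_comm]
    rw [this, tsum_mul_left, hx y hy, mul_zero]


/-!
For the existence statement take `X = c₀` and `F = ℝ ∙ σ`, where `σ ∈ (c₀)**` sums the
coordinates of a functional, i.e. `σ = (1, 1, 1, …) ∈ ℓ∞`. Every `e_i* - e_0*` lies in `F₀`, so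
`(F₀)₀ = 0` and its projection constant is `0`, while a projection onto a nonzero subspace has
norm at least `1`.

For the concrete pair, `F₀` contains `e₀ + e₁ - e_k` for `k ≥ 2`, so `x ∈ V` has
`x_k = x₀ + x₁` for `k ≥ 2`; since `x` vanishes at infinity, `x = x₀ • (1, -1, 0, …)`, and
`x ↦ ((x₀ - x₁) / 2) • (1, -1, 0, …)` is a projection of norm `1`. In `ℓ∞` every `v` in the span
of `f₁, f₂` has `v₂ = v₀ + v₁`; testing a projection `P` on the norm-one vectors `f₁ - e₁`,
`f₂ - e₀` and `f₁ + e₁ = f₂ + e₀` gives `4 ≤ 3 ‖P‖`.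
-/

open Filter

section ProjConst

variable {Y : Type*} [NormedAddCommGroup Y] [NormedSpace ℝ Y] {W : Submodule ℝ Y}
  {P : Y →L[ℝ] Y}

theorem isProj_iff_comp_self_and_range :
    LinearMap.IsProj W P ↔ P.comp P = P ∧ LinearMap.range (P : Y →ₗ[ℝ] Y) = W := by
  constructor
  · intro h
    refine ⟨ContinuousLinearMap.ext fun x => h.map_id _ (h.map_mem x), ?_⟩
    exact LinearMap.IsProj.range (f := (P : Y →ₗ[ℝ] Y)) ⟨h.map_mem, h.map_id⟩
  · rintro ⟨hPP, rfl⟩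
    refine ⟨fun x => LinearMap.mem_range_self _ x, ?_⟩
    rintro _ ⟨x, rfl⟩
    exact congrArg (· x) hPP

theorem relProjConst_eq_sInf_image :
    relProjConst W = sInf ((‖·‖) '' {P : Y →L[ℝ] Y | LinearMap.IsProj W P}) := by
  simp only [relProjConst, isProj_iff_comp_self_and_range, Set.image, Set.mem_ofPred_eq, and_assoc]

theorem relProjConst_le_norm (hP : LinearMap.IsProj W P) : relProjConst W ≤ ‖P‖ := by
  rw [relProjConst_eq_sInf_image]
  exact csInf_le ⟨0, by rintro _ ⟨Q, -, rfl⟩; exact norm_nonneg Q⟩ ⟨P, hP, rfl⟩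

theorem le_relProjConst {c : ℝ} (hP : LinearMap.IsProj W P)
    (h : ∀ Q : Y →L[ℝ] Y, LinearMap.IsProj W Q → c ≤ ‖Q‖) : c ≤ relProjConst W := by
  rw [relProjConst_eq_sInf_image]
  exact le_csInf ⟨_, P, hP, rfl⟩ (by rintro _ ⟨Q, hQ, rfl⟩; exact h Q hQ)

theorem LinearMap.IsProj.one_le_norm (hP : LinearMap.IsProj W P) (hW : W ≠ ⊥) : 1 ≤ ‖P‖ := by
  obtain ⟨v, hv, hv0⟩ := W.ne_bot_iff.mp hW
  have : 1 * ‖v‖ ≤ ‖P‖ * ‖v‖ := by simpa [hP.map_id v hv] using P.le_opNorm v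
  exact le_of_mul_le_mul_right this (norm_pos_iff.mpr hv0)

theorem relProjConst_eq_one (hP : LinearMap.IsProj W P) (hW : W ≠ ⊥) (hP1 : ‖P‖ ≤ 1) :
    relProjConst W = 1 :=
  le_antisymm ((relProjConst_le_norm hP).trans hP1)
    (le_relProjConst hP fun _ hQ => hQ.one_le_norm hW)

theorem one_le_relProjConst (hP : LinearMap.IsProj W P) (hW : W ≠ ⊥) : 1 ≤ relProjConst W :=
  le_relProjConst hP fun _ hQ => hQ.one_le_norm hW

theorem relProjConst_bot : relProjConst (⊥ : Submodule ℝ Y) = 0 := by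
  have h0 : LinearMap.IsProj (⊥ : Submodule ℝ Y) (0 : Y →L[ℝ] Y) :=
    ⟨fun _ => Submodule.zero_mem _, fun x hx => ((Submodule.mem_bot ℝ).mp hx).symm⟩
  exact le_antisymm (by simpa using relProjConst_le_norm h0)
    (le_relProjConst h0 fun Q _ => norm_nonneg Q)

theorem isProj_span_singleton_smulRight {φ : StrongDual ℝ Y} {v : Y} (hφ : φ v = 1) :
    LinearMap.IsProj (ℝ ∙ v) (φ.smulRight v) where
  map_mem x := Submodule.smul_mem _ _ (Submodule.mem_span_singleton_self v)
  map_id x hx := by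
    obtain ⟨c, rfl⟩ := Submodule.mem_span_singleton.mp hx
    simp [hφ]

theorem isProj_span_pair_smulRight_add {φ ψ : StrongDual ℝ Y} {v w : Y}
    (hφv : φ v = 1) (hφw : φ w = 0) (hψv : ψ v = 0) (hψw : ψ w = 1) :
    LinearMap.IsProj (Submodule.span ℝ {v, w}) (φ.smulRight v + ψ.smulRight w) where
  map_mem x := Submodule.mem_span_pair.mpr ⟨φ x, ψ x, rfl⟩
  map_id x hx := by
    obtain ⟨a, b, rfl⟩ := Submodule.mem_span_pair.mp hx
    simp [hφv, hφw, hψv, hψw]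

theorem one_le_relProjConst_span_singleton {v : Y} (hv : v ≠ 0) : 1 ≤ relProjConst (ℝ ∙ v) := by
  obtain ⟨g, -, hg⟩ := exists_dual_vector ℝ v (norm_ne_zero_iff.mpr hv)
  have hφ : (‖v‖⁻¹ • g) v = 1 := by simp [hg, norm_ne_zero_iff.mpr hv]
  exact one_le_relProjConst (isProj_span_singleton_smulRight hφ) (by simpa using hv)

end ProjConst

namespace ZeroAtInftyContinuousMap

variable {α β : Type*} [TopologicalSpace α] [NormedAddCommGroup β]

theorem norm_apply_le_norm (f : C₀(α, β)) (a : α) : ‖f a‖ ≤ ‖f‖ := by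
  simpa [norm_toBCF_eq_norm] using f.toBCF.norm_coe_le_norm a

theorem norm_le_of_forall_le {f : C₀(α, β)} {C : ℝ} (hC : 0 ≤ C) (h : ∀ a, ‖f a‖ ≤ C) :
    ‖f‖ ≤ C := by
  rw [← norm_toBCF_eq_norm]
  exact (BoundedContinuousFunction.norm_le hC).2 h

theorem eq_zero_of_eventually_eq [(cocompact α).NeBot] (f : C₀(α, β)) {c : β}
    (h : ∀ᶠ a in cocompact α, f a = c) : c = 0 :=
  tendsto_nhds_unique (tendsto_const_nhds.congr' (h.mono fun _ ha => ha.symm)) (zero_at_infty f)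

variable (α) in
def evalCLM (a : α) : StrongDual ℝ C₀(α, ℝ) :=
  LinearMap.mkContinuous
    { toFun := fun f => f a
      map_add' := fun _ _ => rfl
      map_smul' := fun _ _ => rfl } 1
    fun f => by simpa using f.norm_apply_le_norm a

@[simp]
theorem evalCLM_apply (a : α) (f : C₀(α, ℝ)) : evalCLM α a f = f a := rfl

end ZeroAtInftyContinuousMap

open ZeroAtInftyContinuousMap

theorem c0_eq_zero_of_forall_ge_apply_eq {x : C₀(ℕ, ℝ)} {c : ℝ} {N : ℕ}
    (h : ∀ i, N ≤ i → x i = c) : c = 0 :=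
  x.eq_zero_of_eventually_eq (by rw [cocompact_eq_atTop]; exact eventually_atTop.2 ⟨N, h⟩)

def c0Single (n : ℕ) : C₀(ℕ, ℝ) :=
  ⟨⟨(Pi.single n 1 : ℕ → ℝ), continuous_of_discreteTopology⟩, by
    rw [cocompact_eq_atTop]
    exact tendsto_const_nhds.congr'
      ((eventually_gt_atTop n).mono fun i hi => by simp [hi.ne'])⟩

@[simp]
theorem c0Single_apply (n i : ℕ) : c0Single n i = (Pi.single n 1 : ℕ → ℝ) i := rfl

theorem summable_coe_l1 (y : lp (fun _ : ℕ => ℝ) 1) : Summable fun i => y i := by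
  simpa using pairing_summable y (x := fun _ => 1) (C := 1) (by simp)

theorem tsum_mul_ite_zero_one (y : lp (fun _ : ℕ => ℝ) 1) (k : ℕ) :
    ∑' i, y i * (if i = k then 0 else 1) = ∑' i, y i - y k := by
  have : (fun i => y i * (if i = k then 0 else 1)) = fun i => if i = k then 0 else y i := by
    ext i
    split_ifs <;> simp
  rw [this, (summable_coe_l1 y).tsum_eq_add_tsum_ite k]
  ring

theorem mem_F₀set_iff {y : lp (fun _ : ℕ => ℝ) 1} :
    y ∈ F₀set ↔ y 0 = ∑' i, y i ∧ y 1 = ∑' i, y i := by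
  simp only [F₀set, f₁fn, f₂fn, Set.mem_ofPred_eq, tsum_mul_ite_zero_one, sub_eq_zero]
  exact and_comm.trans (and_congr eq_comm eq_comm)

def testSeq (k : ℕ) : lp (fun _ : ℕ => ℝ) 1 :=
  lp.single 1 0 1 + lp.single 1 1 1 - lp.single 1 k 1

theorem tsum_testSeq_mul {k : ℕ} (hk : 2 ≤ k) (x : ℕ → ℝ) :
    ∑' i, testSeq k i * x i = x 0 + x 1 - x k := by
  have hk0 : k ≠ 0 := by omega
  have hk1 : k ≠ 1 := by omega
  rw [tsum_eq_sum (s := {0, 1, k}), Finset.sum_insert (by simp [hk0.symm]),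
    Finset.sum_insert (by simp [hk1.symm]), Finset.sum_singleton]
  · simp [testSeq, hk0, hk1, hk0.symm, hk1.symm]
    ring
  · intro i hi
    simp only [Finset.mem_insert, Finset.mem_singleton, not_or] at hi
    simp [testSeq, hi.1, hi.2.1, hi.2.2]

theorem testSeq_mem_F₀set {k : ℕ} (hk : 2 ≤ k) : testSeq k ∈ F₀set := by
  have hsum : ∑' i, testSeq k i = 1 := by
    simpa using tsum_testSeq_mul hk 1
  rw [mem_F₀set_iff, hsum]
  simp [testSeq, Pi.single_apply]
  omega

theorem apply_eq_add_of_mem_Vc {x : C₀(ℕ, ℝ)} (hx : x ∈ Vc) {k : ℕ} (hk : 2 ≤ k) :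
    x k = x 0 + x 1 := by
  have := hx (testSeq k) (testSeq_mem_F₀set hk)
  rw [tsum_testSeq_mul hk] at this
  linarith

def vcGen : C₀(ℕ, ℝ) := c0Single 0 - c0Single 1

theorem vcGen_apply (i : ℕ) :
    vcGen i = (Pi.single 0 1 : ℕ → ℝ) i - (Pi.single 1 1 : ℕ → ℝ) i := rfl

theorem vcGen_ne_zero : vcGen ≠ 0 := by
  intro h
  simpa [vcGen_apply] using congrArg (· 0) h

theorem vcGen_mem_Vc : vcGen ∈ Vc := by
  intro y hy
  obtain ⟨h0, h1⟩ := mem_F₀set_iff.mp hy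
  rw [tsum_eq_sum (s := {0, 1}) fun i hi => by
    simp only [Finset.mem_insert, Finset.mem_singleton, not_or] at hi
    simp [vcGen_apply, hi.1, hi.2]]
  simp [vcGen_apply, h0, h1]

theorem Vc_eq_span : Vc = ℝ ∙ vcGen := by
  refine le_antisymm (fun x hx => ?_) ((Submodule.span_singleton_le_iff_mem _ _).mpr vcGen_mem_Vc)
  have hconst (k : ℕ) (hk : 2 ≤ k) := apply_eq_add_of_mem_Vc hx hk
  have hsum : x 0 + x 1 = 0 := c0_eq_zero_of_forall_ge_apply_eq hconst
  refine Submodule.mem_span_singleton.mpr ⟨x 0, ?_⟩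
  ext (_ | _ | i)
  · simp [vcGen_apply]
  · simp [vcGen_apply]
    linarith
  · simp [vcGen_apply, hconst (i + 2) (by omega), hsum]

theorem finrank_Vc : Module.finrank ℝ Vc = 1 := by
  rw [Vc_eq_span]
  exact finrank_span_singleton vcGen_ne_zero

theorem norm_vcGen_le : ‖vcGen‖ ≤ 1 :=
  norm_le_of_forall_le zero_le_one fun i => by
    rcases i with _ | _ | i <;> simp [vcGen_apply]

theorem relProjConst_Vc : relProjConst Vc = 1 := by
  set φ : StrongDual ℝ C₀(ℕ, ℝ) := (1 / 2 : ℝ) • (evalCLM ℕ 0 - evalCLM ℕ 1)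
  have hφ : φ vcGen = 1 := by
    simp [φ, vcGen_apply]
    norm_num
  have hφ_norm : ‖φ‖ ≤ 1 := by
    refine ContinuousLinearMap.opNorm_le_bound _ zero_le_one fun x => ?_
    calc ‖φ x‖ = |x 0 - x 1| / 2 := by simp [φ]; ring
      _ ≤ (‖x 0‖ + ‖x 1‖) / 2 := by gcongr; exact abs_sub _ _
      _ ≤ (‖x‖ + ‖x‖) / 2 := by gcongr <;> exact x.norm_apply_le_norm _
      _ = 1 * ‖x‖ := by ring
  rw [Vc_eq_span]
  refine relProjConst_eq_one (isProj_span_singleton_smulRight hφ)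
    (by simpa using vcGen_ne_zero) ?_
  rw [ContinuousLinearMap.norm_smulRight_apply]
  exact mul_le_one₀ hφ_norm (norm_nonneg _) norm_vcGen_le

section LInfty

local notation "ℓ∞" => lp (fun _ : ℕ => ℝ) ∞

@[simp]
theorem f₁_apply (i : ℕ) : f₁ i = if i = 1 then 0 else 1 := rfl

@[simp]
theorem f₂_apply (i : ℕ) : f₂ i = if i = 0 then 0 else 1 := rfl

theorem apply_two_eq_of_mem_span {v : ℓ∞} (hv : v ∈ Submodule.span ℝ {f₁, f₂}) :
    v 2 = v 0 + v 1 := by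
  obtain ⟨a, b, rfl⟩ := Submodule.mem_span_pair.mp hv
  simp only [lp.coeFn_add, lp.coeFn_smul, Pi.add_apply, Pi.smul_apply, f₁_apply, f₂_apply]
  norm_num

theorem four_div_three_le_norm_of_isProj {P : ℓ∞ →L[ℝ] ℓ∞}
    (hP : LinearMap.IsProj (Submodule.span ℝ {f₁, f₂}) P) : 4 / 3 ≤ ‖P‖ := by
  have hcoord (x : ℓ∞) (hx : ∀ i, |x i| ≤ 1) (n : ℕ) : |P x n| ≤ ‖P‖ :=
    calc |P x n| ≤ ‖P x‖ := lp.norm_apply_le_norm ENNReal.top_ne_zero (P x) n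
      _ ≤ ‖P‖ * ‖x‖ := P.le_opNorm x
      _ ≤ ‖P‖ := mul_le_of_le_one_right (norm_nonneg P) (lp.norm_le_of_forall_le zero_le_one hx)
  have hf₁ : P f₁ = f₁ := hP.map_id _ (Submodule.subset_span (by simp))
  have hf₂ : P f₂ = f₂ := hP.map_id _ (Submodule.subset_span (by simp))
  set e : ℕ → ℓ∞ := fun n => lp.single ∞ n 1
  set B := P (e 1) 0
  set C := P (e 0) 1
  have h₁ : |1 - B| ≤ ‖P‖ := by
    have := hcoord (f₁ - e 1) (fun i => by rcases i with _ | _ | i <;> simp [e]) 0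
    simpa [hf₁, B] using this
  have h₂ : |1 - C| ≤ ‖P‖ := by
    have := hcoord (f₂ - e 0) (fun i => by rcases i with _ | _ | i <;> simp [e]) 1
    simpa [hf₂, C] using this
  have hone : f₁ + e 1 = f₂ + e 0 := by
    ext i
    rcases i with _ | _ | i <;> simp [e]
  have h₃ : |(1 + B) + (1 + C)| ≤ ‖P‖ := by
    have := hcoord (f₁ + e 1) (fun i => by rcases i with _ | _ | i <;> simp [e]) 2
    rw [apply_two_eq_of_mem_span (hP.map_mem _)] at this
    nth_rewrite 2 [hone] at this
    simpa [hf₁, hf₂, B, C] using this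
  linarith [(le_abs_self _).trans h₁, (le_abs_self _).trans h₂, (le_abs_self _).trans h₃]

theorem one_lt_relProjConst_span_f₁_f₂ :
    1 < relProjConst (Submodule.span ℝ {f₁, f₂} : Submodule ℝ ℓ∞) := by
  have hP := isProj_span_pair_smulRight_add (φ := lp.evalCLM ℝ (fun _ : ℕ => ℝ) ∞ 0)
    (ψ := lp.evalCLM ℝ (fun _ : ℕ => ℝ) ∞ 1) (v := f₁) (w := f₂) rfl rfl rfl rfl
  exact (by norm_num : (1 : ℝ) < 4 / 3).trans_le
    (le_relProjConst hP fun _ hQ => four_div_three_le_norm_of_isProj hQ)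

end LInfty

theorem nonempty_projConstCounterexample {X : Type} [NormedAddCommGroup X] [NormedSpace ℝ X]
    [CompleteSpace X] {φ : StrongDual ℝ (StrongDual ℝ X)} (hφ : φ ≠ 0)
    (h : preAnn (preAnn (ℝ ∙ φ)) = ⊥) : Nonempty ProjConstCounterexample :=
  ⟨{ X := X
     F := ℝ ∙ φ
     finDim := inferInstance
     projConst_ne := by
       rw [h, relProjConst_bot]
       exact (zero_lt_one.trans_le (one_le_relProjConst_span_singleton hφ)).ne }⟩

theorem sum_abs_apply_c0Single_le (ℓ : StrongDual ℝ C₀(ℕ, ℝ)) (s : Finset ℕ) :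
    ∑ i ∈ s, |ℓ (c0Single i)| ≤ ‖ℓ‖ := by
  set u : C₀(ℕ, ℝ) := ∑ i ∈ s, (SignType.sign (ℓ (c0Single i)) : ℝ) • c0Single i
  have hu : ‖u‖ ≤ 1 := by
    refine norm_le_of_forall_le zero_le_one fun j => ?_
    have : u j = if j ∈ s then (SignType.sign (ℓ (c0Single j)) : ℝ) else 0 := by
      change evalCLM ℕ j u = _
      simp [u, map_sum, Pi.single_apply]
    rw [this]
    split_ifs
    · cases SignType.sign (ℓ (c0Single j)) <;> simp
    · simp
  calc ∑ i ∈ s, |ℓ (c0Single i)| = ℓ u := by simp [u, map_sum, sign_mul_self]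
    _ ≤ ‖ℓ‖ * ‖u‖ := (le_abs_self _).trans (ℓ.le_opNorm u)
    _ ≤ ‖ℓ‖ := mul_le_of_le_one_right (norm_nonneg ℓ) hu

theorem summable_apply_c0Single (ℓ : StrongDual ℝ C₀(ℕ, ℝ)) :
    Summable fun i => ℓ (c0Single i) :=
  (summable_of_sum_le (fun _ => abs_nonneg _) (sum_abs_apply_c0Single_le ℓ)).of_abs

def sumFunctional : StrongDual ℝ (StrongDual ℝ C₀(ℕ, ℝ)) :=
  LinearMap.mkContinuous
    { toFun := fun ℓ => ∑' i, ℓ (c0Single i)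
      map_add' := fun ℓ ℓ' => (summable_apply_c0Single ℓ).tsum_add (summable_apply_c0Single ℓ')
      map_smul' := fun _ _ => tsum_mul_left } 1
    fun ℓ => by
      rw [one_mul]
      refine (norm_tsum_le_tsum_norm (summable_apply_c0Single ℓ).norm).trans ?_
      simpa only [Real.norm_eq_abs] using
        Real.tsum_le_of_sum_le (fun _ => abs_nonneg _) (sum_abs_apply_c0Single_le ℓ)

theorem sumFunctional_evalCLM (n : ℕ) : sumFunctional (evalCLM ℕ n) = 1 := by
  change ∑' i, (Pi.single i 1 : ℕ → ℝ) n = 1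
  simp [Pi.single_apply]

-- `rw [map_sub]` fails here: this subtraction is found through the normed-group instance on the
-- dual, which matches the one `map_sub` expects only up to unfolding.
theorem sumFunctional_evalCLM_sub (i j : ℕ) :
    sumFunctional (evalCLM ℕ i - evalCLM ℕ j) = 0 := by
  have := sumFunctional.map_sub (evalCLM ℕ i) (evalCLM ℕ j)
  rwa [sumFunctional_evalCLM, sumFunctional_evalCLM, sub_self] at this

theorem sumFunctional_ne_zero : sumFunctional ≠ 0 := fun h => by
  simpa [h] using sumFunctional_evalCLM 0

theorem preAnn_preAnn_span_sumFunctional :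
    preAnn (preAnn (E := StrongDual ℝ C₀(ℕ, ℝ)) (ℝ ∙ sumFunctional)) = ⊥ := by
  refine (Submodule.eq_bot_iff _).mpr fun x hx => ?_
  have hconst (i : ℕ) : x i = x 0 := by
    have hmem : evalCLM ℕ i - evalCLM ℕ 0 ∈
        preAnn (E := StrongDual ℝ C₀(ℕ, ℝ)) (ℝ ∙ sumFunctional) := by
      intro f hf
      obtain ⟨c, rfl⟩ := Submodule.mem_span_singleton.mp hf
      rw [_root_.smul_apply, sumFunctional_evalCLM_sub, smul_zero]
    simpa [sub_eq_zero] using hx _ hmem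
  have h0 : x 0 = 0 := c0_eq_zero_of_forall_ge_apply_eq (N := 0) fun i _ => hconst i
  ext i
  simp [hconst i, h0]

/-- There are a real Banach space `X` and a finite-dimensional `F ⊆ X**` with
`λ((F₀)₀, X) ≠ λ(F, X**)`.  Concretely, for `X = c₀` and `F ⊆ ℓ∞ = (c₀)**` the span
of `f₁ = (1,0,1,1,…)` and `f₂ = (0,1,1,1,…)`, the pre-pre-annihilator `V` is
one-dimensional, `λ(V, c₀) = 1`, while `λ(F, ℓ∞) > 1`. -/
theorem exists_projConst_counterexample :
    Nonempty ProjConstCounterexample ∧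
      Module.finrank ℝ Vc = 1 ∧
      relProjConst (Y := C₀(ℕ, ℝ)) Vc = 1 ∧
      1 < relProjConst (Y := lp (fun _ : ℕ => ℝ) ∞) (Submodule.span ℝ {f₁, f₂}) :=
  ⟨nonempty_projConstCounterexample sumFunctional_ne_zero preAnn_preAnn_span_sumFunctional,
    finrank_Vc, relProjConst_Vc, one_lt_relProjConst_span_f₁_f₂⟩

end
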